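/- Let u > 0 with u ≠ 1, set x_u = 2/(1+√(1+8u²)), γ_u = 1/Φ(A_{u,0};1) = (1-u²x_u²)/x_u, and let tA_{u,0}, tA_{u,1} be the transposes of A_{u,0} = [[x_u,0],[-u²x_u²,1]] and A_{u,1} = [[0,x_u],[-u²x_u²,1-u²x_u²]]. Then it is NOT the case that Φ(tA_{u,0}; γ_u−2) = γ_u−2 and Φ(tA_{u,1}; γ_u−2) = γ_u−2 both hold; equivalently, the point γ_u−2 is a common fixed point of both transposed Möbius maps if and only if u = 1. -/

import Mathlib

noncomputable def xu (u : ℝ) : ℝ := 2 / (1 + Real.sqrt (1 + 8 * u ^ 2))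

/-- Φ(A;z) = (az+b)/(cz+d). -/
noncomputable def Phi (a b c d z : ℝ) : ℝ := (a * z + b) / (c * z + d)

/-!
Writing `x = x_u`, the defining quadratic of `x_u` gives `u²x² = (1 - x)/2`, so
`γ_u - 2 = (1 - 3x)/(2x)`, and the affine map `tA_{u,0}` sends this point to `-x`.
Hence it is fixed by `tA_{u,0}` only if `2x² - 3x + 1 = 0`, i.e. `x = 1/2` (as `0 < x < 1`),
which forces `u = 1`; for `u = 1` both maps fix `γ₁ - 2 = -1/2` by direct computation.
-/

lemma xu_pos (u : ℝ) : 0 < xu u := by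
  unfold xu; positivity

lemma one_lt_sqrt_one_add_eight_mul_sq {u : ℝ} (hu : u ≠ 0) : 1 < Real.sqrt (1 + 8 * u ^ 2) := by
  rw [Real.lt_sqrt zero_le_one]
  have := pow_pos (abs_pos.mpr hu) 2
  rw [sq_abs] at this
  linarith

lemma xu_lt_one {u : ℝ} (hu : u ≠ 0) : xu u < 1 := by
  have hs := one_lt_sqrt_one_add_eight_mul_sq hu
  rw [xu, div_lt_one (by linarith)]
  linarith

lemma sq_mul_xu_sq (u : ℝ) : u ^ 2 * xu u ^ 2 = (1 - xu u) / 2 := by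
  rw [xu]
  set s := Real.sqrt (1 + 8 * u ^ 2)
  have hsq : s ^ 2 = 1 + 8 * u ^ 2 := Real.sq_sqrt (by positivity)
  have hpos : 0 < 1 + s := by positivity
  field_simp
  linear_combination -hsq

lemma xu_one : xu 1 = 1 / 2 := by
  rw [xu, show (1 + 8 * (1 : ℝ) ^ 2) = 3 ^ 2 by norm_num, Real.sqrt_sq (by norm_num)]
  norm_num

lemma xu_eq_half_iff {u : ℝ} (hu : 0 ≤ u) : xu u = 1 / 2 ↔ u = 1 := by
  refine ⟨fun hx => ?_, fun h => h ▸ xu_one⟩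
  have hu2 : u ^ 2 = 1 := by
    have := sq_mul_xu_sq u
    rw [hx] at this
    linarith
  exact (pow_eq_one_iff_of_nonneg hu two_ne_zero).mp hu2

lemma phi_fixed_iff_eq_half {x : ℝ} (hx0 : x ≠ 0) (hx1 : x ≠ 1) :
    Phi x (-((1 - x) / 2)) 0 1 ((1 - (1 - x) / 2) / x - 2) = (1 - (1 - x) / 2) / x - 2 ↔
      x = 1 / 2 := by
  have himage : Phi x (-((1 - x) / 2)) 0 1 ((1 - (1 - x) / 2) / x - 2) = -x := by
    simp only [Phi]
    field_simp
    ring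
  rw [himage]
  constructor
  · intro h
    field_simp at h
    have hfactor : (2 * x - 1) * (x - 1) = 0 := by linear_combination -h
    rcases mul_eq_zero.mp hfactor with h | h
    · linarith
    · exact absurd (sub_eq_zero.mp h) hx1
  · rintro rfl
    norm_num

/-- The transposes are tA_{u,0} = [[x_u, -u²x_u²],[0,1]] and
tA_{u,1} = [[0,-u²x_u²],[x_u,1-u²x_u²]]. -/
theorem stmt_17 (u : ℝ) (hu : 0 < u) :
    (let γ := (1 - u ^ 2 * (xu u) ^ 2) / xu u
     Phi (xu u) (-(u ^ 2 * (xu u) ^ 2)) 0 1 (γ - 2) = γ - 2 ∧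
     Phi 0 (-(u ^ 2 * (xu u) ^ 2)) (xu u) (1 - u ^ 2 * (xu u) ^ 2) (γ - 2) = γ - 2)
    ↔ u = 1 := by
  simp only [sq_mul_xu_sq]
  constructor
  · rintro ⟨hfixed, -⟩
    have hx := (phi_fixed_iff_eq_half (xu_pos u).ne' (xu_lt_one hu.ne').ne).mp hfixed
    exact (xu_eq_half_iff hu.le).mp hx
  · rintro rfl
    rw [xu_one]
    norm_num [Phi]
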